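/- arXiv:2205.05164 — 11 statements merged into one kernel-verified Lean document; each statement's English description precedes it below -/
import Mathlib

section
/- If A is a normal bounded operator on a complex Hilbert space H, then for every λ ∈ (0,1) and all x, y ∈ H, one has |⟨Ax, y⟩| ≤ (‖Ax‖‖y‖)^λ (‖Ay‖‖x‖)^(1−λ). -/
/-!
Cauchy–Schwarz bounds `‖⟪A x, y⟫‖` by `‖A x‖ ‖y‖`, and, through `⟪A x, y⟫ = ⟪x, A† y⟫` and
`‖A† y‖ = ‖A y‖` for normal `A`, also by `‖A y‖ ‖x‖`; any weighted geometric mean of two upper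
bounds is again an upper bound.
-/

open ContinuousLinearMap Set

theorem Real.le_rpow_mul_rpow_of_le_of_le {t a b p : ℝ} (ht : 0 ≤ t) (ha : t ≤ a) (hb : t ≤ b)
    (hp₀ : 0 ≤ p) (hp₁ : p ≤ 1) : t ≤ a ^ p * b ^ (1 - p) :=
  calc t = t ^ p * t ^ (1 - p) := by
        rw [← Real.rpow_add' ht (by norm_num), add_sub_cancel, Real.rpow_one]
    _ ≤ a ^ p * b ^ (1 - p) :=
        mul_le_mul (Real.rpow_le_rpow ht ha hp₀) (Real.rpow_le_rpow ht hb (by linarith))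
          (Real.rpow_nonneg ht _) (Real.rpow_nonneg (ht.trans ha) _)

theorem IsStarNormal.norm_inner_apply_le {𝕜 E : Type*} [RCLike 𝕜] [NormedAddCommGroup E]
    [InnerProductSpace 𝕜 E] [CompleteSpace E] {T : E →L[𝕜] E} (hT : IsStarNormal T) (x y : E) :
    ‖(inner 𝕜 (T x) y : 𝕜)‖ ≤ ‖T y‖ * ‖x‖ :=
  calc ‖(inner 𝕜 (T x) y : 𝕜)‖ = ‖(inner 𝕜 x (adjoint T y) : 𝕜)‖ := by
        rw [adjoint_inner_right]
    _ ≤ ‖x‖ * ‖adjoint T y‖ := norm_inner_le_norm _ _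
    _ = ‖T y‖ * ‖x‖ := by rw [← isStarNormal_iff_norm_eq_adjoint.mp hT, mul_comm]

theorem gcsi_of_normal {H : Type*} [NormedAddCommGroup H] [InnerProductSpace ℂ H]
    [CompleteSpace H] (A : H →L[ℂ] H) (hA : A * adjoint A = adjoint A * A) :
    ∀ lam ∈ Set.Ioo (0 : ℝ) 1, ∀ x y : H,
      ‖(inner ℂ (A x) y : ℂ)‖ ≤ (‖A x‖ * ‖y‖) ^ lam * (‖A y‖ * ‖x‖) ^ (1 - lam) := by
  rintro lam ⟨hlam₀, hlam₁⟩ x y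
  have hA_normal : IsStarNormal A := ⟨hA.symm⟩
  exact Real.le_rpow_mul_rpow_of_le_of_le (norm_nonneg _) (norm_inner_le_norm _ _)
    (hA_normal.norm_inner_apply_le x y) hlam₀.le hlam₁.le
end

section
/- If a bounded operator A on a complex Hilbert space satisfies the generalized Cauchy–Schwarz inequality for some λ ∈ (0,1), then it also satisfies it for every λ' ∈ (λ, 1). -/
open ContinuousLinearMap Set

/-- `A` satisfies the generalized Cauchy–Schwarz inequality with exponent `lam`. -/
def GCSI {H : Type*} [NormedAddCommGroup H] [InnerProductSpace ℂ H]
    (A : H →L[ℂ] H) (lam : ℝ) : Prop :=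
  ∀ x y : H, ‖(inner ℂ (A x) y : ℂ)‖ ≤ (‖A x‖ * ‖y‖) ^ lam * (‖A y‖ * ‖x‖) ^ (1 - lam)

/-! The Cauchy–Schwarz inequality is the case `λ = 1` of GCSI, and the right-hand side
`a ^ λ * b ^ (1 - λ)` is a weighted geometric mean of its values at exponents `λ` and `1`.
A lower bound for two numbers is a lower bound for their weighted geometric means, so GCSI
for `λ` passes to every exponent between `λ` and `1`. -/

namespace Real

theorem le_rpow_mul_rpow_of_le_of_le_s3 {c x y t : ℝ} (hc : 0 ≤ c) (hx : c ≤ x) (hy : c ≤ y)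
    (ht₀ : 0 ≤ t) (ht₁ : t ≤ 1) : c ≤ x ^ t * y ^ (1 - t) := by
  calc c = c ^ t * c ^ (1 - t) := by
        rw [← rpow_add' hc (by norm_num), add_sub_cancel, rpow_one]
    _ ≤ x ^ t * y ^ (1 - t) := by
        have hx₀ : 0 ≤ x := hc.trans hx
        gcongr

theorem rpow_mul_rpow_rpow_mul_rpow {a b lam t : ℝ} (ha : 0 < a) (hb : 0 ≤ b) :
    (a ^ lam * b ^ (1 - lam)) ^ t * a ^ (1 - t) =
      a ^ (lam * t + (1 - t)) * b ^ ((1 - lam) * t) := by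
  rw [mul_rpow (by positivity) (by positivity), ← rpow_mul ha.le, ← rpow_mul hb,
    mul_right_comm, ← rpow_add ha]

theorem le_rpow_mul_rpow_of_le_of_le_rpow_mul_rpow {a b c lam mu : ℝ} (hb : 0 ≤ b)
    (hc : 0 ≤ c) (hca : c ≤ a) (hlam : c ≤ a ^ lam * b ^ (1 - lam)) (hlam₁ : lam < 1)
    (hmu : mu ∈ Icc lam 1) : c ≤ a ^ mu * b ^ (1 - mu) := by
  obtain rfl | hc₀ := hc.eq_or_lt
  · have ha : 0 ≤ a := hca
    positivity
  have ha : 0 < a := hc₀.trans_le hca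
  have hlam₁' : 0 < 1 - lam := by linarith
  -- `mu` is the weighted mean `lam * t + 1 * (1 - t)` of the two exponents
  set t := (1 - mu) / (1 - lam)
  have hmu_eq : (1 - lam) * t = 1 - mu := mul_div_cancel₀ _ hlam₁'.ne'
  calc c ≤ (a ^ lam * b ^ (1 - lam)) ^ t * a ^ (1 - t) :=
        le_rpow_mul_rpow_of_le_of_le_s3 hc hlam hca (div_nonneg (by linarith [hmu.2]) hlam₁'.le)
          ((div_le_one hlam₁').2 (by linarith [hmu.1]))
    _ = a ^ mu * b ^ (1 - mu) := by
        rw [rpow_mul_rpow_rpow_mul_rpow ha hb, hmu_eq]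
        congr 2
        linarith

end Real

theorem gcsi_mono_general {H : Type*} [NormedAddCommGroup H] [InnerProductSpace ℂ H]
    (A : H →L[ℂ] H) (lam : ℝ)
    (hA : GCSI A lam) : ∀ lam' ∈ Set.Ioo lam 1, GCSI A lam' := by
  rintro lam' ⟨hlam, hlam'⟩ x y
  exact Real.le_rpow_mul_rpow_of_le_of_le_rpow_mul_rpow (by positivity) (norm_nonneg _)
    (norm_inner_le_norm _ _) (hA x y) (hlam.trans hlam') ⟨hlam.le, hlam'.le⟩

theorem gcsi_mono {H : Type*} [NormedAddCommGroup H] [InnerProductSpace ℂ H]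
    (A : H →L[ℂ] H) (lam : ℝ) (hlam : lam ∈ Set.Ioo (0 : ℝ) 1)
    (hA : GCSI A lam) : ∀ lam' ∈ Set.Ioo lam 1, GCSI A lam' :=
  gcsi_mono_general A lam hA
end

section
/- If a bounded operator A on a complex Hilbert space satisfies the generalized Cauchy–Schwarz inequality for some λ ∈ (0,1), then the kernel of A equals the kernel of A². -/
open ContinuousLinearMap Set

namespace GCSI

variable {H : Type*} [NormedAddCommGroup H] [InnerProductSpace ℂ H] {A : H →L[ℂ] H} {lam : ℝ}

/-- GCSI at `x = z`, `y = A z` bounds `‖A z‖ ^ 2` by a multiple of `‖A (A z)‖ ^ (1 - lam)`,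
and `1 - lam > 0`. -/
theorem apply_eq_zero_of_apply_apply_eq_zero (hA : GCSI A lam) (hlam : lam < 1) {z : H}
    (hz : A (A z) = 0) : A z = 0 := by
  have key := hA z (A z)
  have hrhs : (‖A (A z)‖ * ‖z‖) ^ (1 - lam) = 0 := by
    rw [hz, norm_zero, zero_mul, Real.zero_rpow (by linarith)]
  rw [← inner_self_re_eq_norm, inner_self_eq_norm_mul_norm, hrhs, mul_zero] at key
  have hnorm : ‖A z‖ * ‖A z‖ = 0 := le_antisymm key (mul_self_nonneg _)
  exact norm_eq_zero.mp (mul_self_eq_zero.mp hnorm)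

theorem ker_sq_le_ker (hA : GCSI A lam) (hlam : lam < 1) :
    LinearMap.ker (A ∘L A : H →ₗ[ℂ] H) ≤ LinearMap.ker (A : H →ₗ[ℂ] H) :=
  fun _ hz => hA.apply_eq_zero_of_apply_apply_eq_zero hlam hz

end GCSI

theorem gcsi_ker_sq_general {H : Type*} [NormedAddCommGroup H] [InnerProductSpace ℂ H]
    (A : H →L[ℂ] H) (lam : ℝ) (hlam : lam ∈ Set.Ioo (0 : ℝ) 1)
    (hA : GCSI A lam) : LinearMap.ker (A : H →ₗ[ℂ] H) = LinearMap.ker (A ∘L A : H →ₗ[ℂ] H) :=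
  le_antisymm (LinearMap.ker_le_ker_comp _ _) (hA.ker_sq_le_ker hlam.2)

theorem gcsi_ker_sq {H : Type*} [NormedAddCommGroup H] [InnerProductSpace ℂ H]
    [CompleteSpace H] (A : H →L[ℂ] H) (lam : ℝ) (hlam : lam ∈ Set.Ioo (0 : ℝ) 1)
    (hA : GCSI A lam) : LinearMap.ker (A : H →ₗ[ℂ] H) = LinearMap.ker (A ∘L A : H →ₗ[ℂ] H) :=
  gcsi_ker_sq_general A lam hlam hA
end

section
/- If the adjoint A* of a bounded operator A on a complex Hilbert space satisfies the generalized Cauchy–Schwarz inequality for some λ ∈ (0,1), then the orthogonal complement of the range of A equals the orthogonal complement of the range of A². -/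
open ContinuousLinearMap Set

namespace GCSI

variable {H : Type*} [NormedAddCommGroup H] [InnerProductSpace ℂ H] {T : H →L[ℂ] H} {lam : ℝ}

/-- With `y = T x` the left-hand side of the inequality is `‖T x‖²`, and the right-hand side
vanishes because its factor `‖T (T x)‖ ^ (1 - λ)` has a positive exponent. -/
theorem apply_eq_zero_of_apply_apply_eq_zero_s5 (hT : GCSI T lam) (hlam : lam < 1) {x : H}
    (hx : T (T x) = 0) : T x = 0 := by
  have key := hT x (T x)
  rw [hx, norm_zero, zero_mul, Real.zero_rpow (by linarith), mul_zero,
    inner_self_eq_norm_sq_to_K, norm_pow, RCLike.norm_ofReal, abs_norm] at key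
  exact norm_eq_zero.mp (pow_eq_zero_iff two_ne_zero |>.mp (le_antisymm key (by positivity)))

theorem ker_comp_self (hT : GCSI T lam) (hlam : lam < 1) : (T ∘L T).ker = T.ker := by
  refine le_antisymm (fun x hx => hT.apply_eq_zero_of_apply_apply_eq_zero_s5 hlam hx) ?_
  intro x (hx : T x = 0)
  change T (T x) = 0
  rw [hx, map_zero]

end GCSI

theorem gcsi_adjoint_range_orth {H : Type*} [NormedAddCommGroup H] [InnerProductSpace ℂ H]
    [CompleteSpace H] (A : H →L[ℂ] H) (lam : ℝ) (hlam : lam ∈ Set.Ioo (0 : ℝ) 1)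
    (hA : GCSI (adjoint A) lam) :
    (LinearMap.range (A : H →ₗ[ℂ] H))ᗮ = (LinearMap.range ((A ∘L A : H →L[ℂ] H) : H →ₗ[ℂ] H))ᗮ := by
  rw [orthogonal_range, orthogonal_range, adjoint_comp, hA.ker_comp_self hlam.2]
end

section
/- If a bounded operator A on a complex Hilbert space satisfies the generalized Cauchy–Schwarz inequality for some λ ∈ (0,1), then the kernel of A is contained in the kernel of A*. -/
open ContinuousLinearMap Set

namespace GCSI

variable {H : Type*} [NormedAddCommGroup H] [InnerProductSpace ℂ H] {A : H →L[ℂ] H} {lam : ℝ}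
  {z : H}

theorem inner_apply_eq_zero_of_apply_eq_zero (hA : GCSI A lam) (hlam : lam ≠ 1)
    (hz : A z = 0) (x : H) : inner ℂ (A x) z = 0 := by
  have hexp : 1 - lam ≠ 0 := sub_ne_zero.mpr hlam.symm
  have h := hA x z
  rw [hz, norm_zero, zero_mul, Real.zero_rpow hexp, mul_zero] at h
  exact norm_le_zero_iff.mp h

theorem mem_orthogonal_range_of_apply_eq_zero (hA : GCSI A lam) (hlam : lam ≠ 1)
    (hz : A z = 0) : z ∈ A.rangeᗮ := by
  rw [Submodule.mem_orthogonal]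
  rintro _ ⟨x, rfl⟩
  exact hA.inner_apply_eq_zero_of_apply_eq_zero hlam hz x

end GCSI

theorem gcsi_ker_subset_ker_adjoint {H : Type*} [NormedAddCommGroup H]
    [InnerProductSpace ℂ H] [CompleteSpace H] (A : H →L[ℂ] H) (lam : ℝ)
    (hlam : lam ∈ Set.Ioo (0 : ℝ) 1) (hA : GCSI A lam) :
    ∀ z : H, A z = 0 → adjoint A z = 0 := by
  intro z hz
  have hz' := hA.mem_orthogonal_range_of_apply_eq_zero hlam.2.ne hz
  rwa [orthogonal_range] at hz'
end

section
/- If a bounded operator A on a complex Hilbert space satisfies the generalized Cauchy–Schwarz inequality for some λ ∈ (0,1), then the range of A intersects the kernel of A only in {0}. -/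
open ContinuousLinearMap Set

/-- For `y ∈ ker A` the factor `(‖A y‖ * ‖x‖) ^ (1 - lam)` is `0 ^ (1 - lam) = 0`, as `lam < 1`. -/
theorem GCSI.ker_le_orthogonal_range {H : Type*} [NormedAddCommGroup H]
    [InnerProductSpace ℂ H] {A : H →L[ℂ] H} {lam : ℝ} (hA : GCSI A lam) (hlam : lam < 1) :
    LinearMap.ker (A : H →ₗ[ℂ] H) ≤ (LinearMap.range (A : H →ₗ[ℂ] H))ᗮ := by
  intro y hy
  rw [Submodule.mem_orthogonal]
  rintro _ ⟨x, rfl⟩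
  have hAy : A y = 0 := hy
  have h := hA x y
  rw [hAy, norm_zero, zero_mul, Real.zero_rpow (by linarith), mul_zero] at h
  exact norm_le_zero_iff.mp h

theorem gcsi_range_inter_ker {H : Type*} [NormedAddCommGroup H] [InnerProductSpace ℂ H]
    (A : H →L[ℂ] H) (lam : ℝ) (hlam : lam ∈ Set.Ioo (0 : ℝ) 1) (hA : GCSI A lam) :
    ∀ y : H, y ∈ LinearMap.range (A : H →ₗ[ℂ] H) → A y = 0 → y = 0 := by
  intro y hy hker
  have hy' : y ∈ LinearMap.range (A : H →ₗ[ℂ] H) ⊓ (LinearMap.range (A : H →ₗ[ℂ] H))ᗮ :=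
    ⟨hy, hA.ker_le_orthogonal_range hlam.2 hker⟩
  rwa [Submodule.inf_orthogonal_eq_bot, Submodule.mem_bot] at hy'
end

section
/- Let A be a bounded operator on a complex Hilbert space. Suppose there exists x ∈ H with Ax ≠ 0 such that for every y ∈ H the equality |⟨Ax, y⟩| = (‖Ax‖‖y‖)^λ (‖Ay‖‖x‖)^(1−λ) holds for some fixed λ ∈ (0,1). Then ‖Az‖ ≤ ‖A*z‖ for every z ∈ H. -/
/-!
Taking `y = x` in the hypothesis gives equality in the Cauchy–Schwarz inequality for `A x`
and `x`, so `x` is an eigenvector: `A x = μ • x`. For `y ⟂ x` the left-hand side then vanishes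
while `(‖A x‖ * ‖y‖) ^ λ > 0`, forcing `A y = 0` because `1 - λ ≠ 0`. Hence `A = μ • P` with `P`
the orthogonal projection onto `ℂ ∙ x`; such an operator is normal, so `‖A z‖ = ‖A† z‖`.
-/

open ContinuousLinearMap Set

namespace ContinuousLinearMap

variable {𝕜 E : Type*} [RCLike 𝕜] [NormedAddCommGroup E] [InnerProductSpace 𝕜 E]

theorem eq_smul_starProjection (A : E →L[𝕜] E) (K : Submodule 𝕜 E)
    [K.HasOrthogonalProjection] (μ : 𝕜) (hK : ∀ v ∈ K, A v = μ • v) (hKorth : ∀ v ∈ Kᗮ, A v = 0) :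
    A = μ • K.starProjection := by
  ext v
  have hsplit : v = K.starProjection v + (v - K.starProjection v) := by abel
  conv_lhs => rw [hsplit]
  rw [map_add, hK _ (K.starProjection_apply_mem v),
    hKorth _ (K.sub_starProjection_mem_orthogonal v), add_zero, smul_apply]

theorem isStarNormal_smul_starProjection [CompleteSpace E] (K : Submodule 𝕜 E)
    [K.HasOrthogonalProjection] (μ : 𝕜) : IsStarNormal (μ • K.starProjection) :=
  have := (isSelfAdjoint_starProjection K).isStarNormal
  inferInstance

end ContinuousLinearMap

theorem gcsi_equality_cohyponormal {H : Type*} [NormedAddCommGroup H]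
    [InnerProductSpace ℂ H] [CompleteSpace H] (A : H →L[ℂ] H) (x : H) (hx : A x ≠ 0)
    (lam : ℝ) (hlam : lam ∈ Set.Ioo (0 : ℝ) 1)
    (heq : ∀ y : H,
      ‖(inner ℂ (A x) y : ℂ)‖ = (‖A x‖ * ‖y‖) ^ lam * (‖A y‖ * ‖x‖) ^ (1 - lam)) :
    ∀ z : H, ‖A z‖ ≤ ‖adjoint A z‖ := by
  have hx0 : x ≠ 0 := by rintro rfl; simp at hx
  obtain ⟨μ, hAx⟩ : ∃ μ : ℂ, A x = μ • x := by
    have hcs : ‖(inner ℂ x (A x) : ℂ)‖ = ‖x‖ * ‖A x‖ := by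
      have h := heq x
      rw [← Real.rpow_add (by positivity), add_sub_cancel, Real.rpow_one] at h
      rw [norm_inner_symm, h, mul_comm]
    exact Or.resolve_left (((norm_inner_eq_norm_tfae ℂ x (A x)).out 0 2).mp hcs) hx0
  have hker : ∀ y ∈ (ℂ ∙ x)ᗮ, A y = 0 := by
    intro y hy
    rw [Submodule.mem_orthogonal_singleton_iff_inner_right] at hy
    rcases eq_or_ne y 0 with rfl | hy0
    · exact map_zero A
    have hAxy : (inner ℂ (A x) y : ℂ) = 0 := by rw [hAx, inner_smul_left, hy, mul_zero]
    have h := heq y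
    rw [hAxy, norm_zero, eq_comm, mul_eq_zero, Real.rpow_eq_zero_iff_of_nonneg (by positivity),
      Real.rpow_eq_zero_iff_of_nonneg (by positivity)] at h
    simpa [hx, hx0, hy0, sub_eq_zero, hlam.2.ne'] using h
  have hA : A = μ • (ℂ ∙ x).starProjection := by
    refine A.eq_smul_starProjection _ μ (fun v hv => ?_) hker
    obtain ⟨c, rfl⟩ := Submodule.mem_span_singleton.mp hv
    rw [map_smul, hAx, smul_comm]
  have hnormal : IsStarNormal A := hA ▸ isStarNormal_smul_starProjection _ μ
  exact fun z => (isStarNormal_iff_norm_eq_adjoint.mp hnormal z).le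
end

section
/- Let A be a bounded operator on a complex Hilbert space with polar decomposition A = U|A|, where U is a partial isometry with ker U = ker A. If A is semi-hyponormal (i.e. |A*| ≤ |A|), then A satisfies the generalized Cauchy–Schwarz inequality with λ = 1/2: |⟨Ax, y⟩| ≤ (‖Ax‖‖y‖)^{1/2} (‖Ay‖‖x‖)^{1/2} for all x, y ∈ H. -/
/-!
Write `T = |A|` and `u = U* y`. By the polar decomposition `⟪A x, y⟫ = ⟪T x, u⟫`, and the
Cauchy–Schwarz inequality for the positive form `⟪T ·, ·⟫` bounds its square by
`⟪T x, x⟫ ⟪T u, u⟫`. The first factor is at most `‖T x‖ ‖x‖ = ‖A x‖ ‖x‖`. The second equals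
`⟪U T U* y, y⟫ = ⟪|A*| y, y⟫`, which semi-hyponormality bounds by `⟪T y, y⟫ ≤ ‖A y‖ ‖y‖`.
-/

open ContinuousLinearMap

lemma Real.le_rpow_half_mul_rpow_half {a b c : ℝ} (hb : 0 ≤ b) (h : a ^ 2 ≤ b * c) :
    a ≤ b ^ ((1 : ℝ) / 2) * c ^ ((1 : ℝ) / 2) := by
  rw [← Real.sqrt_eq_rpow, ← Real.sqrt_eq_rpow, ← Real.sqrt_mul hb]
  exact Real.le_sqrt_of_sq_le h

namespace ContinuousLinearMap

lemma re_inner_apply_le_of_le {𝕜 E : Type*} [RCLike 𝕜] [NormedAddCommGroup E]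
    [InnerProductSpace 𝕜 E] {S T : E →L[𝕜] E} (h : S ≤ T) (x : E) :
    RCLike.re (inner 𝕜 (S x) x) ≤ RCLike.re (inner 𝕜 (T x) x) := by
  have := ((le_def S T).mp h).re_inner_nonneg_left x
  rw [sub_apply, inner_sub_left, map_sub] at this
  linarith

variable {H : Type*} [NormedAddCommGroup H] [InnerProductSpace ℂ H] [CompleteSpace H]

lemma inner_apply_eq_inner_sqrt_apply {T : H →L[ℂ] H} (hT : 0 ≤ T) (x y : H) :
    inner ℂ (T x) y = inner ℂ (CFC.sqrt T x) (CFC.sqrt T y) := by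
  have hS : IsSelfAdjoint (CFC.sqrt T) := .of_nonneg (CFC.sqrt_nonneg T)
  conv_lhs => rw [← CFC.sqrt_mul_sqrt_self T hT, mul_apply_eq_comp]
  rw [← adjoint_inner_right, hS.adjoint_eq]

lemma norm_inner_apply_sq_le {T : H →L[ℂ] H} (hT : 0 ≤ T) (x y : H) :
    ‖inner ℂ (T x) y‖ ^ 2 ≤ RCLike.re (inner ℂ (T x) x) * RCLike.re (inner ℂ (T y) y) := by
  simp only [inner_apply_eq_inner_sqrt_apply hT, inner_self_eq_norm_sq, ← mul_pow]
  gcongr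
  exact norm_inner_le_norm _ _

lemma norm_sqrt_adjoint_mul_self_apply (A : H →L[ℂ] H) (x : H) :
    ‖CFC.sqrt (adjoint A * A) x‖ = ‖A x‖ := by
  have hAA : 0 ≤ adjoint A * A := by
    simpa only [star_eq_adjoint] using star_mul_self_nonneg A
  rw [← sq_eq_sq₀ (norm_nonneg _) (norm_nonneg _), apply_norm_sq_eq_inner_adjoint_left A,
    ← inner_self_eq_norm_sq (𝕜 := ℂ), ← inner_apply_eq_inner_sqrt_apply hAA]
  rfl

lemma re_inner_sqrt_adjoint_mul_self_apply_le (A : H →L[ℂ] H) (x : H) :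
    RCLike.re (inner ℂ (CFC.sqrt (adjoint A * A) x) x) ≤ ‖A x‖ * ‖x‖ := by
  rw [← norm_sqrt_adjoint_mul_self_apply A x]
  exact re_inner_le_norm _ x

end ContinuousLinearMap

theorem semihyponormal_gcsi_half_general {H : Type*} [NormedAddCommGroup H]
    [InnerProductSpace ℂ H] [CompleteSpace H] (A U : H →L[ℂ] H)
    (hpolar : A = U * CFC.sqrt (adjoint A * A))
    (hUAU : U * CFC.sqrt (adjoint A * A) * adjoint U = CFC.sqrt (A * adjoint A))
    (hsemi : CFC.sqrt (A * adjoint A) ≤ CFC.sqrt (adjoint A * A)) :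
    ∀ x y : H, ‖(inner ℂ (A x) y : ℂ)‖ ≤
      (‖A x‖ * ‖y‖) ^ ((1 : ℝ) / 2) * (‖A y‖ * ‖x‖) ^ ((1 : ℝ) / 2) := by
  intro x y
  set T := CFC.sqrt (adjoint A * A)
  set u := adjoint U y
  have hT : 0 ≤ T := CFC.sqrt_nonneg (adjoint A * A)
  have hinner : inner ℂ (A x) y = inner ℂ (T x) u := by
    rw [adjoint_inner_right, hpolar, mul_apply_eq_comp]
  have hx : RCLike.re (inner ℂ (T x) x) ≤ ‖A x‖ * ‖x‖ :=
    re_inner_sqrt_adjoint_mul_self_apply_le A x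
  have hu : RCLike.re (inner ℂ (T u) u) ≤ ‖A y‖ * ‖y‖ := by
    calc RCLike.re (inner ℂ (T u) u)
        = RCLike.re (inner ℂ (CFC.sqrt (A * adjoint A) y) y) := by
          rw [← hUAU, adjoint_inner_right]; rfl
      _ ≤ RCLike.re (inner ℂ (T y) y) := re_inner_apply_le_of_le hsemi y
      _ ≤ ‖A y‖ * ‖y‖ := re_inner_sqrt_adjoint_mul_self_apply_le A y
  refine Real.le_rpow_half_mul_rpow_half (by positivity) ?_
  calc ‖inner ℂ (A x) y‖ ^ 2
      ≤ RCLike.re (inner ℂ (T x) x) * RCLike.re (inner ℂ (T u) u) := by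
        rw [hinner]; exact norm_inner_apply_sq_le hT x u
    _ ≤ (‖A x‖ * ‖x‖) * (‖A y‖ * ‖y‖) :=
        mul_le_mul hx hu (((nonneg_iff_isPositive T).mp hT).re_inner_nonneg_left u)
          (by positivity)
    _ = (‖A x‖ * ‖y‖) * (‖A y‖ * ‖x‖) := by ring

theorem semihyponormal_gcsi_half {H : Type*} [NormedAddCommGroup H]
    [InnerProductSpace ℂ H] [CompleteSpace H] (A U : H →L[ℂ] H)
    (hpolar : A = U * CFC.sqrt (adjoint A * A))
    (hPI : U * adjoint U * U = U)
    (hker : LinearMap.ker (U : H →ₗ[ℂ] H) = LinearMap.ker (A : H →ₗ[ℂ] H))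
    (hUAU : U * CFC.sqrt (adjoint A * A) * adjoint U = CFC.sqrt (A * adjoint A))
    (hsemi : CFC.sqrt (A * adjoint A) ≤ CFC.sqrt (adjoint A * A)) :
    ∀ x y : H, ‖(inner ℂ (A x) y : ℂ)‖ ≤
      (‖A x‖ * ‖y‖) ^ ((1 : ℝ) / 2) * (‖A y‖ * ‖x‖) ^ ((1 : ℝ) / 2) :=
  semihyponormal_gcsi_half_general A U hpolar hUAU hsemi
end

section
/- Let A be a bounded operator on a complex Hilbert space with polar decomposition A = U|A|. If A satisfies the generalized Cauchy–Schwarz inequality for some λ ∈ (0,1), then A is paranormal: ‖Aw‖² ≤ ‖A²w‖‖w‖ for every w ∈ H. -/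
open ContinuousLinearMap Set

set_option synthInstance.maxHeartbeats 1000000

/-! Taking `x = w` and `y = A w` in the inequality gives
`‖A w‖² ≤ (‖A w‖²)^λ (‖A² w‖ ‖w‖)^(1-λ)`; cancelling `(‖A w‖²)^λ` and taking the
`1/(1-λ)`-th power leaves `‖A w‖² ≤ ‖A² w‖ ‖w‖`. -/

theorem Real.le_of_le_rpow_mul_rpow_one_sub {x y lam : ℝ} (hx : 0 ≤ x) (hy : 0 ≤ y)
    (hlam : lam < 1) (h : x ≤ x ^ lam * y ^ (1 - lam)) : x ≤ y := by
  rcases hx.eq_or_lt with rfl | hx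
  · exact hy
  have hpow : x ^ (1 - lam) ≤ y ^ (1 - lam) := by
    rwa [Real.rpow_sub hx, Real.rpow_one, div_le_iff₀ (Real.rpow_pos_of_pos hx lam), mul_comm]
  exact (Real.rpow_le_rpow_iff hx.le hy (by linarith)).mp hpow

theorem GCSI.norm_sq_le {H : Type*} [NormedAddCommGroup H] [InnerProductSpace ℂ H]
    {A : H →L[ℂ] H} {lam : ℝ} (hA : GCSI A lam) (w : H) :
    ‖A w‖ ^ 2 ≤ (‖A w‖ ^ 2) ^ lam * (‖A (A w)‖ * ‖w‖) ^ (1 - lam) := by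
  simpa [inner_self_eq_norm_sq_to_K, ← sq] using hA w (A w)

theorem gcsi_paranormal_general {H : Type*} [NormedAddCommGroup H]
    [InnerProductSpace ℂ H] (A : H →L[ℂ] H)
    (lam : ℝ) (hlam : lam ∈ Set.Ioo (0 : ℝ) 1) (hA : GCSI A lam) :
    ∀ w : H, ‖A w‖ ^ 2 ≤ ‖A (A w)‖ * ‖w‖ := fun w =>
  Real.le_of_le_rpow_mul_rpow_one_sub (by positivity) (by positivity) hlam.2 (hA.norm_sq_le w)

theorem gcsi_paranormal {H : Type*} [NormedAddCommGroup H]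
    [InnerProductSpace ℂ H] [CompleteSpace H] (A U : H →L[ℂ] H)
    (hpolar : A = U * CFC.sqrt (adjoint A * A))
    (hPI : U * adjoint U * U = U)
    (hkerU : LinearMap.ker (U : H →ₗ[ℂ] H) = LinearMap.ker (A : H →ₗ[ℂ] H))
    (hkerUstar : LinearMap.ker (adjoint U : H →ₗ[ℂ] H) = LinearMap.ker (adjoint A : H →ₗ[ℂ] H))
    (hpow : ∀ t : ℝ, 0 < t →
      U * CFC.rpow (CFC.sqrt (adjoint A * A)) t * adjoint U =
        CFC.rpow (CFC.sqrt (A * adjoint A)) t)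
    (lam : ℝ) (hlam : lam ∈ Set.Ioo (0 : ℝ) 1) (hA : GCSI A lam) :
    ∀ w : H, ‖A w‖ ^ 2 ≤ ‖A (A w)‖ * ‖w‖ :=
  gcsi_paranormal_general A lam hlam hA
end

section
/- Let a, b be positive elements of a C*-algebra B such that ‖a^{1/2} c‖ ≤ ‖b^{1/2} c‖ for all positive c ∈ B. Then a ≤ b. -/
/-!
For strictly positive `d`, `a ≤ d` is equivalent to `‖a^{1/2} d^{-1/2}‖ ≤ 1`. Testing the
hypothesis with `c = (b + ε)^{-1/2}` therefore gives `a ≤ b + ε` for every `ε > 0`, and `a ≤ b`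
follows because the order of a C⋆-algebra is closed.
-/

open Filter Topology CFC

lemma le_of_forall_pos_le_add_algebraMap {A : Type*} [Ring A] [PartialOrder A]
    [TopologicalSpace A] [IsTopologicalRing A] [OrderClosedTopology A] [Algebra ℝ A]
    [ContinuousSMul ℝ A] {a b : A} (h : ∀ ε : ℝ, 0 < ε → a ≤ b + algebraMap ℝ A ε) :
    a ≤ b := by
  have hlim : Tendsto (fun ε : ℝ ↦ b + algebraMap ℝ A ε) (𝓝[>] 0) (𝓝 b) := by
    simpa using tendsto_const_nhds.add
      ((continuous_algebraMap ℝ A).tendsto 0 |>.mono_left nhdsWithin_le_nhds)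
  exact ge_of_tendsto hlim (eventually_nhdsWithin_of_forall h)

lemma le_of_norm_sqrt_mul_rpow_le_of_le {A : Type*} [CStarAlgebra A] [PartialOrder A]
    [StarOrderedRing A] {a b d : A} (ha : 0 ≤ a) (hb : 0 ≤ b) (hbd : b ≤ d)
    (hd : IsStrictlyPositive d)
    (h : ‖sqrt a * d ^ (-(1 / 2) : ℝ)‖ ≤ ‖sqrt b * d ^ (-(1 / 2) : ℝ)‖) : a ≤ d :=
  (le_iff_norm_sqrt_mul_rpow a d).mpr <| h.trans <| (le_iff_norm_sqrt_mul_rpow b d).mp hbd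

theorem le_of_sqrt_mul_norm_le {B : Type*} [CStarAlgebra B] [PartialOrder B]
    [StarOrderedRing B] (a b : B) (ha : 0 ≤ a) (hb : 0 ≤ b)
    (h : ∀ c : B, 0 ≤ c → ‖CFC.sqrt a * c‖ ≤ ‖CFC.sqrt b * c‖) : a ≤ b := by
  refine le_of_forall_pos_le_add_algebraMap fun ε hε ↦ ?_
  have hε' : IsStrictlyPositive (algebraMap ℝ B ε) := isStrictlyPositive_algebraMap hε
  exact le_of_norm_sqrt_mul_rpow_le_of_le ha hb (le_add_of_nonneg_right hε'.nonneg)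
    (isStrictlyPositive_add (.inr ⟨hb, hε'⟩)) (h _ rpow_nonneg)
end

section
/- The operator A on ℂ³ given by the matrix with rows (1,0,0), (0,0,1), (0,0,0) does not satisfy the generalized Cauchy–Schwarz inequality for any λ ∈ (0,1); equivalently, there exist vectors x, y ∈ ℂ³ such that |⟨Ax, y⟩| > (‖Ax‖‖y‖)^λ (‖Ay‖‖x‖)^(1−λ) for all λ ∈ (0,1). In fact, ker A ≠ ker A² for this A. -/
open ContinuousLinearMap Set

/-!
If `T (T z) = 0` but `T z ≠ 0`, then `x = z`, `y = T z` violate the generalized Cauchy–Schwarz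
inequality: the right-hand side contains the factor `‖T y‖ = 0` raised to the positive power
`1 - λ`, while `⟪T x, y⟫ = ‖T z‖² > 0`. For the given operator, `z = (0, 0, 1)` works.
-/

theorem exists_gcsi_violation_of_apply_apply_eq_zero {𝕜 E : Type*} [RCLike 𝕜]
    [NormedAddCommGroup E] [InnerProductSpace 𝕜 E] {T : E →L[𝕜] E} {z : E}
    (hTTz : T (T z) = 0) (hTz : T z ≠ 0) :
    ∃ x y : E, ∀ lam ∈ Ioo (0 : ℝ) 1,
      (‖T x‖ * ‖y‖) ^ lam * (‖T y‖ * ‖x‖) ^ (1 - lam) < ‖(inner 𝕜 (T x) y : 𝕜)‖ := by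
  refine ⟨z, T z, fun lam hlam => ?_⟩
  rw [hTTz, norm_zero, zero_mul, Real.zero_rpow (sub_ne_zero.2 hlam.2.ne'), mul_zero]
  exact norm_pos_iff.2 (inner_self_ne_zero.2 hTz)

theorem ContinuousLinearMap.ker_ne_ker_comp_self {R M : Type*} [Semiring R] [TopologicalSpace M]
    [AddCommMonoid M] [Module R M] {T : M →L[R] M} {z : M}
    (hTTz : T (T z) = 0) (hTz : T z ≠ 0) :
    LinearMap.ker (T : M →ₗ[R] M) ≠ LinearMap.ker ((T ∘L T : M →L[R] M) : M →ₗ[R] M) := by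
  intro h
  have hz : z ∈ LinearMap.ker ((T ∘L T : M →L[R] M) : M →ₗ[R] M) := hTTz
  rw [← h] at hz
  exact hTz hz

/-- The operator on `ℂ³` with matrix rows `(1,0,0)`, `(0,0,1)`, `(0,0,0)` fails the
generalized Cauchy–Schwarz inequality for every `λ ∈ (0,1)`, and indeed
`ker A ≠ ker A²`. -/
theorem example_not_gcsi
    (A : EuclideanSpace ℂ (Fin 3) →L[ℂ] EuclideanSpace ℂ (Fin 3))
    (hA : ∀ v : EuclideanSpace ℂ (Fin 3),
      A v = (WithLp.equiv 2 (Fin 3 → ℂ)).symm ![v 0, v 2, 0]) :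
    (∃ x y : EuclideanSpace ℂ (Fin 3), ∀ lam ∈ Set.Ioo (0 : ℝ) 1,
      (‖A x‖ * ‖y‖) ^ lam * (‖A y‖ * ‖x‖) ^ (1 - lam) < ‖(inner ℂ (A x) y : ℂ)‖) ∧
    LinearMap.ker (A : EuclideanSpace ℂ (Fin 3) →ₗ[ℂ] EuclideanSpace ℂ (Fin 3)) ≠
      LinearMap.ker ((A ∘L A : EuclideanSpace ℂ (Fin 3) →L[ℂ] EuclideanSpace ℂ (Fin 3)) :
        EuclideanSpace ℂ (Fin 3) →ₗ[ℂ] EuclideanSpace ℂ (Fin 3)) := by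
  have hAe₂ : A (EuclideanSpace.single 2 1) = EuclideanSpace.single 1 1 := by
    rw [hA]; ext i; fin_cases i <;> simp
  have hAe₁ : A (EuclideanSpace.single 1 1) = 0 := by
    rw [hA]; ext i; fin_cases i <;> simp
  have he₁ : (EuclideanSpace.single 1 1 : EuclideanSpace ℂ (Fin 3)) ≠ 0 := by
    simp
  rw [← hAe₂] at hAe₁ he₁
  exact ⟨exists_gcsi_violation_of_apply_apply_eq_zero hAe₁ he₁, ker_ne_ker_comp_self hAe₁ he₁⟩
end
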